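/- arXiv:1806.07588 — 3 statements merged into one kernel-verified Lean document; each statement's English description precedes it below -/
import Mathlib

section
/- Let d ≥ 1, 1 < q < ∞ and 0 < r < ∞. There exists a constant C = C(q,r,d) > 0 such that for every f ∈ L^1(ℝ^d) ∩ L^∞(ℝ^d), the centered Hardy–Littlewood maximal function satisfies |||M(f)|||_{L^{q,r}} ≤ C ‖f‖_{L^∞}^{1−1/q} ‖f‖_{L^1}^{1/q}. -/
open MeasureTheory Metric Set
open scoped ENNReal NNReal

noncomputable section

abbrev Euc (d : ℕ) := EuclideanSpace ℝ (Fin d)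

def rieszGamma (d : ℕ) (α : ℝ) : ℝ :=
  Real.pi ^ ((d : ℝ) / 2) * (2 : ℝ) ^ α * Real.Gamma (α / 2) / Real.Gamma (((d : ℝ) - α) / 2)

/-- Riesz potential of a scalar function. -/
def rieszPotential (d : ℕ) (α : ℝ) (f : Euc d → ℝ) (x : Euc d) : ℝ :=
  (rieszGamma d α)⁻¹ * ∫ y, f y / ‖x - y‖ ^ ((d : ℝ) - α)

/-- Componentwise Riesz potential of a vector field. -/
def rieszPotentialVec (d : ℕ) (α : ℝ) (F : Euc d → Euc d) (x : Euc d) : Euc d :=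
  WithLp.toLp 2 (fun i => rieszPotential d α (fun y => F y i) x)

/-- Lorentz quasi-norm via the distribution function. -/
def lorentzNorm (d : ℕ) (q r : ℝ) {X : Type*} [NormedAddCommGroup X]
    (f : Euc d → X) : ℝ≥0∞ :=
  (ENNReal.ofReal q * ∫⁻ t in Ioi (0 : ℝ),
      ENNReal.ofReal (t ^ (r - 1)) * (volume {x : Euc d | t < ‖f x‖}) ^ (r / q)) ^ (1 / r)

/-- Lorentz quasi-norm of an `ℝ≥0∞`-valued function. -/
def lorentzNormE (d : ℕ) (q r : ℝ) (g : Euc d → ℝ≥0∞) : ℝ≥0∞ :=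
  (ENNReal.ofReal q * ∫⁻ t in Ioi (0 : ℝ),
      ENNReal.ofReal (t ^ (r - 1)) *
        (volume {x : Euc d | ENNReal.ofReal t < g x}) ^ (r / q)) ^ (1 / r)

/-- The nonlinear fractional operator `D^{1-α}`. -/
def fracD (d : ℕ) (α : ℝ) (u : Euc d → ℝ) (x : Euc d) : ℝ≥0∞ :=
  ∫⁻ y, ENNReal.ofReal (|u x - u y| / ‖x - y‖ ^ ((d : ℝ) + 1 - α))

/-- Centered Hardy–Littlewood maximal function. -/
def maximalFn (d : ℕ) (f : Euc d → ℝ) (x : Euc d) : ℝ≥0∞ :=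
  ⨆ (r : ℝ) (_ : 0 < r), (volume (ball x r))⁻¹ * ∫⁻ y in ball x r, (‖f y‖₊ : ℝ≥0∞)

def divergence (d : ℕ) (Φ : Euc d → Euc d) (x : Euc d) : ℝ :=
  ∑ i, fderiv ℝ (fun y => Φ y i) x (EuclideanSpace.single i 1)

/-- Perimeter of a set in the sense of De Giorgi. -/
def perimeter (d : ℕ) (A : Set (Euc d)) : ℝ≥0∞ :=
  ⨆ (Φ : Euc d → Euc d) (_ : ContDiff ℝ 1 Φ ∧ HasCompactSupport Φ ∧ ∀ x, ‖Φ x‖ ≤ 1),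
    ENNReal.ofReal (∫ x in A, divergence d Φ x)

end

section AuxMax

/-- The maximal function is bounded by the essential supremum. -/
lemma maximalFn_le_essSup (d : ℕ) (f : Euc d → ℝ) (x : Euc d) :
    maximalFn d f x ≤ eLpNorm f ⊤ volume := by
  rw [eLpNorm_exponent_top]
  refine iSup_le fun ρ => iSup_le fun hρ => ?_
  have hb0 : volume (ball x ρ) ≠ 0 := (measure_ball_pos volume x hρ).ne'
  have hbt : volume (ball x ρ) ≠ ∞ := measure_ball_lt_top.ne
  have h1 : ∫⁻ y in ball x ρ, (‖f y‖₊ : ℝ≥0∞) ≤ eLpNormEssSup f volume * volume (ball x ρ) := by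
    calc ∫⁻ y in ball x ρ, (‖f y‖₊ : ℝ≥0∞)
        ≤ ∫⁻ _ in ball x ρ, eLpNormEssSup f volume :=
          lintegral_mono_ae (ae_restrict_of_ae (enorm_ae_le_eLpNormEssSup f volume))
      _ = eLpNormEssSup f volume * volume (ball x ρ) := setLIntegral_const _ _
  calc (volume (ball x ρ))⁻¹ * ∫⁻ y in ball x ρ, (‖f y‖₊ : ℝ≥0∞)
      ≤ (volume (ball x ρ))⁻¹ * (eLpNormEssSup f volume * volume (ball x ρ)) :=
        mul_le_mul_right h1 _
    _ = eLpNormEssSup f volume := by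
        rw [mul_comm (eLpNormEssSup f volume), ← mul_assoc,
          ENNReal.inv_mul_cancel hb0 hbt, one_mul]

lemma maximalFn_zero (d : ℕ) (f : Euc d → ℝ)
    (hf : ∫⁻ y, (‖f y‖₊ : ℝ≥0∞) = 0) (x : Euc d) : maximalFn d f x = 0 := by
  refine le_antisymm (iSup_le fun ρ => iSup_le fun hρ => ?_) zero_le
  have h0 : ∫⁻ y in ball x ρ, (‖f y‖₊ : ℝ≥0∞) = 0 :=
    le_antisymm (hf ▸ lintegral_mono' Measure.restrict_le_self le_rfl) zero_le
  simp [h0]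

/-- Weak (1,1) bound for the centered maximal function, with constant `5^d`. -/
lemma maximalFn_weak11 (d : ℕ) (hd : 1 ≤ d) (f : Euc d → ℝ)
    (hI : ∫⁻ y, (‖f y‖₊ : ℝ≥0∞) < ∞) {t : ℝ} (ht : 0 < t) :
    volume {x : Euc d | ENNReal.ofReal t < maximalFn d f x} ≤
      ENNReal.ofReal ((5 : ℝ) ^ d) * (∫⁻ y, (‖f y‖₊ : ℝ≥0∞)) * (ENNReal.ofReal t)⁻¹ := by
  haveI : Nonempty (Fin d) := Fin.pos_iff_nonempty.mp hd
  haveI : Nontrivial (Euc d) := by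
    refine ⟨EuclideanSpace.single (⟨0, hd⟩ : Fin d) 1, 0, fun h => ?_⟩
    have := congrArg (fun g : Euc d => g (⟨0, hd⟩ : Fin d)) h
    simp [EuclideanSpace.single_apply] at this
  set T := ENNReal.ofReal t with hT
  set I := ∫⁻ y, (‖f y‖₊ : ℝ≥0∞) with hIdef
  set S := {x : Euc d | T < maximalFn d f x} with hS
  have hT0 : T ≠ 0 := (ENNReal.ofReal_pos.2 ht).ne'
  have hTt : T ≠ ∞ := ENNReal.ofReal_ne_top
  set v1 := volume (ball (0 : Euc d) 1) with hv1
  have hv10 : v1 ≠ 0 := (measure_ball_pos volume _ one_pos).ne'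
  have hv1t : v1 ≠ ∞ := measure_ball_lt_top.ne
  have hdim : Module.finrank ℝ (Euc d) = d := finrank_euclideanSpace_fin
  have hball : ∀ (x : Euc d) (ρ : ℝ), 0 ≤ ρ →
      volume (ball x ρ) = ENNReal.ofReal (ρ ^ d) * v1 := by
    intro x ρ hρ
    rw [hv1, Measure.addHaar_ball volume x hρ, hdim]
  have key : ∀ x : Euc d, ∃ ρ : ℝ, x ∈ S →
      0 < ρ ∧ T * volume (ball x ρ) ≤ ∫⁻ y in ball x ρ, (‖f y‖₊ : ℝ≥0∞) := by
    intro x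
    by_cases hx : x ∈ S
    · have hx' : T < ⨆ (ρ : ℝ) (_ : 0 < ρ),
          (volume (ball x ρ))⁻¹ * ∫⁻ y in ball x ρ, (‖f y‖₊ : ℝ≥0∞) := hx
      rw [lt_iSup_iff] at hx'
      obtain ⟨ρ, hρ⟩ := hx'
      rw [lt_iSup_iff] at hρ
      obtain ⟨hρ0, hρlt⟩ := hρ
      refine ⟨ρ, fun _ => ⟨hρ0, ?_⟩⟩
      have hb0 : volume (ball x ρ) ≠ 0 := (measure_ball_pos volume x hρ0).ne'
      have hbt : volume (ball x ρ) ≠ ∞ := measure_ball_lt_top.ne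
      calc T * volume (ball x ρ)
          ≤ ((volume (ball x ρ))⁻¹ * ∫⁻ y in ball x ρ, (‖f y‖₊ : ℝ≥0∞)) * volume (ball x ρ) :=
            mul_le_mul_left hρlt.le _
        _ = ((volume (ball x ρ))⁻¹ * volume (ball x ρ)) *
              ∫⁻ y in ball x ρ, (‖f y‖₊ : ℝ≥0∞) := by ring
        _ = ∫⁻ y in ball x ρ, (‖f y‖₊ : ℝ≥0∞) := by
            rw [ENNReal.inv_mul_cancel hb0 hbt, one_mul]
    · exact ⟨1, fun h => absurd h hx⟩
  choose ρ hρ using key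
  set R := max 1 (I * T⁻¹ * v1⁻¹).toReal with hR
  have hKt : I * T⁻¹ * v1⁻¹ ≠ ∞ :=
    ENNReal.mul_ne_top (ENNReal.mul_ne_top hI.ne (ENNReal.inv_ne_top.2 hT0))
      (ENNReal.inv_ne_top.2 hv10)
  have hρR : ∀ x ∈ S, ρ x ≤ R := by
    intro x hx
    obtain ⟨hρ0, hle⟩ := hρ x hx
    have h1 : T * (ENNReal.ofReal (ρ x ^ d) * v1) ≤ I := by
      rw [← hball x _ hρ0.le]
      exact hle.trans (lintegral_mono' Measure.restrict_le_self le_rfl)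
    have h2 : ENNReal.ofReal (ρ x ^ d) ≤ I * T⁻¹ * v1⁻¹ := by
      have hc : ENNReal.ofReal (ρ x ^ d)
          = T * (ENNReal.ofReal (ρ x ^ d) * v1) * T⁻¹ * v1⁻¹ := by
        rw [show T * (ENNReal.ofReal (ρ x ^ d) * v1) * T⁻¹ * v1⁻¹
              = ENNReal.ofReal (ρ x ^ d) * (T * T⁻¹) * (v1 * v1⁻¹) by ring,
          ENNReal.mul_inv_cancel hT0 hTt, ENNReal.mul_inv_cancel hv10 hv1t, mul_one, mul_one]
      rw [hc]
      exact mul_le_mul_left (mul_le_mul_left h1 _) _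
    have h3 : ρ x ^ d ≤ (I * T⁻¹ * v1⁻¹).toReal :=
      (ENNReal.ofReal_le_iff_le_toReal hKt).1 h2
    by_contra hcon
    push_neg at hcon
    have h1ρ : 1 ≤ ρ x := le_of_lt (lt_of_le_of_lt (le_max_left _ _) hcon)
    have h4 : ρ x ≤ ρ x ^ d := le_self_pow₀ h1ρ (by omega)
    have h5 : (I * T⁻¹ * v1⁻¹).toReal < ρ x ^ d :=
      lt_of_le_of_lt (le_max_right 1 _) (lt_of_lt_of_le hcon h4)
    linarith
  obtain ⟨u, huS, hdisj, hcov⟩ :=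
    Vitali.exists_disjoint_subfamily_covering_enlargement_closedBall S id ρ R hρR 4 (by norm_num)
  have hSsub : S ⊆ ⋃ b ∈ u, ball b (5 * ρ b) := by
    intro a ha
    obtain ⟨b, hbu, hsub⟩ := hcov a ha
    have hρb : 0 < ρ b := (hρ b (huS hbu)).1
    have hmem : a ∈ closedBall (id a) (ρ a) := mem_closedBall_self (hρ a ha).1.le
    exact mem_biUnion hbu (closedBall_subset_ball (by linarith) (hsub hmem))
  have hcount : u.Countable :=
    hdisj.countable_of_nonempty_interior fun b hbu =>
      Set.Nonempty.mono ball_subset_interior_closedBall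
        (nonempty_ball.2 (hρ b (huS hbu)).1)
  haveI := hcount.to_subtype
  have hmeas : ∀ b : u, volume (ball (b : Euc d) (ρ b)) ≤
      T⁻¹ * ∫⁻ y in ball (b : Euc d) (ρ b), (‖f y‖₊ : ℝ≥0∞) := by
    intro b
    obtain ⟨hρ0, hle⟩ := hρ b (huS b.2)
    calc volume (ball (b : Euc d) (ρ b))
        = T⁻¹ * (T * volume (ball (b : Euc d) (ρ b))) := by
          rw [← mul_assoc, ENNReal.inv_mul_cancel hT0 hTt, one_mul]
      _ ≤ T⁻¹ * ∫⁻ y in ball (b : Euc d) (ρ b), (‖f y‖₊ : ℝ≥0∞) := mul_le_mul_right hle _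
  have hdisj' : Pairwise (Function.onFun Disjoint fun b : u => ball (b : Euc d) (ρ b)) := by
    intro b c hbc
    exact Disjoint.mono ball_subset_closedBall ball_subset_closedBall (hdisj.subtype _ _ hbc)
  calc volume S ≤ volume (⋃ b ∈ u, ball b (5 * ρ b)) := measure_mono hSsub
    _ ≤ ∑' b : u, volume (ball (b : Euc d) (5 * ρ b)) := measure_biUnion_le volume hcount _
    _ = ∑' b : u, ENNReal.ofReal ((5 : ℝ) ^ d) * volume (ball (b : Euc d) (ρ b)) := by
        refine tsum_congr fun b => ?_
        have hρ0 : 0 < ρ b := (hρ b (huS b.2)).1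
        rw [hball _ _ (by positivity), hball _ _ hρ0.le, mul_pow,
          ENNReal.ofReal_mul (by positivity), mul_assoc]
    _ = ENNReal.ofReal ((5 : ℝ) ^ d) * ∑' b : u, volume (ball (b : Euc d) (ρ b)) :=
        ENNReal.tsum_mul_left
    _ ≤ ENNReal.ofReal ((5 : ℝ) ^ d) *
          ∑' b : u, T⁻¹ * ∫⁻ y in ball (b : Euc d) (ρ b), (‖f y‖₊ : ℝ≥0∞) :=
        mul_le_mul_right (ENNReal.tsum_le_tsum hmeas) _
    _ = ENNReal.ofReal ((5 : ℝ) ^ d) *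
          (T⁻¹ * ∑' b : u, ∫⁻ y in ball (b : Euc d) (ρ b), (‖f y‖₊ : ℝ≥0∞)) := by
        rw [ENNReal.tsum_mul_left]
    _ ≤ ENNReal.ofReal ((5 : ℝ) ^ d) * (T⁻¹ * I) := by
        refine mul_le_mul_right (mul_le_mul_right ?_ _) _
        rw [← lintegral_iUnion (fun b => measurableSet_ball) hdisj']
        exact lintegral_mono' Measure.restrict_le_self le_rfl
    _ = ENNReal.ofReal ((5 : ℝ) ^ d) * I * T⁻¹ := by ring

end AuxMax

/-- `L¹`–`L^∞` bound for the maximal function in Lorentz spaces. -/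
theorem maximal_function_lorentz_bound (d : ℕ) (hd : 1 ≤ d)
    (q r : ℝ) (hq : 1 < q) (hr : 0 < r) :
    ∃ C : ℝ, 0 < C ∧
      ∀ f : Euc d → ℝ, Integrable f volume → MemLp f ⊤ volume →
        lorentzNormE d q r (maximalFn d f) ≤
          ENNReal.ofReal C * (eLpNorm f ⊤ volume) ^ (1 - 1 / q) *
            (ENNReal.ofReal (∫ x, |f x|)) ^ (1 / q) := by
  have hq0 : 0 < q := lt_trans one_pos hq
  set β := r * (1 - 1 / q) with hβ
  have h1q : 0 < 1 - 1 / q := by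
    have h : 1 / q < 1 := by rw [div_lt_one hq0]; exact hq
    linarith
  have hβ0 : 0 < β := mul_pos hr h1q
  have hrq0 : 0 < r / q := div_pos hr hq0
  set C := (q * ((5 : ℝ) ^ d) ^ (r / q) / β) ^ (1 / r) with hC
  have hCbase : 0 < q * ((5 : ℝ) ^ d) ^ (r / q) / β := by positivity
  have hC0 : 0 < C := Real.rpow_pos_of_pos hCbase _
  refine ⟨C, hC0, fun f hf hftop => ?_⟩
  set I := ∫⁻ y, (‖f y‖₊ : ℝ≥0∞) with hIdef
  have hIne : ENNReal.ofReal (∫ x, |f x|) = I := by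
    have h := ofReal_integral_norm_eq_lintegral_enorm hf
    simp only [Real.norm_eq_abs] at h
    exact h
  have hIlt : I < ∞ := hf.2
  set N := eLpNorm f ⊤ volume with hN
  have hNt : N ≠ ∞ := hftop.eLpNorm_ne_top
  rw [lorentzNormE, hIne]
  by_cases hI0 : I = 0
  · have hM : ∀ x, maximalFn d f x = 0 := maximalFn_zero d f hI0
    have hz : ∀ t ∈ Ioi (0 : ℝ), ENNReal.ofReal (t ^ (r - 1)) *
        (volume {x : Euc d | ENNReal.ofReal t < maximalFn d f x}) ^ (r / q) = 0 := by
      intro t ht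
      have he : {x : Euc d | ENNReal.ofReal t < maximalFn d f x} = ∅ := by
        ext x; simp [hM x]
      rw [he]
      simp [ENNReal.zero_rpow_of_pos hrq0]
    rw [setLIntegral_congr_fun measurableSet_Ioi hz, lintegral_zero, mul_zero,
      ENNReal.zero_rpow_of_pos (by positivity : (0:ℝ) < 1 / r)]
    exact zero_le
  · set A := N.toReal with hA
    have hA0 : (0:ℝ) ≤ A := ENNReal.toReal_nonneg
    set W := ENNReal.ofReal ((5 : ℝ) ^ d) * I with hW
    have hWt : W ≠ ∞ := ENNReal.mul_ne_top ENNReal.ofReal_ne_top hIlt.ne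
    have hμ0 : ∀ t : ℝ, A ≤ t →
        {x : Euc d | ENNReal.ofReal t < maximalFn d f x} = ∅ := by
      intro t hAt
      ext x
      simp only [Set.mem_setOf_eq, Set.mem_empty_iff_false, iff_false, not_lt]
      calc maximalFn d f x ≤ N := maximalFn_le_essSup d f x
        _ = ENNReal.ofReal A := (ENNReal.ofReal_toReal hNt).symm
        _ ≤ ENNReal.ofReal t := ENNReal.ofReal_le_ofReal hAt
    set G : ℝ → ℝ≥0∞ := fun t =>
      ENNReal.ofReal (t ^ (r - 1)) * (W * (ENNReal.ofReal t)⁻¹) ^ (r / q) with hG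
    have hstep1 : ∫⁻ t in Ioi (0 : ℝ), ENNReal.ofReal (t ^ (r - 1)) *
          (volume {x : Euc d | ENNReal.ofReal t < maximalFn d f x}) ^ (r / q)
        ≤ ∫⁻ t in Ioi (0 : ℝ), (Ioc (0 : ℝ) A).indicator G t := by
      refine lintegral_mono_ae ((ae_restrict_iff' measurableSet_Ioi).2 (ae_of_all _ ?_))
      intro t ht
      rcases le_or_gt t A with hta | hta
      · have hmem : (Ioc (0 : ℝ) A).indicator G t = G t :=
          Set.indicator_of_mem (Set.mem_Ioc.mpr ⟨Set.mem_Ioi.mp ht, hta⟩) G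
        rw [hmem]
        simp only [hG]
        refine mul_le_mul_right (ENNReal.rpow_le_rpow ?_ hrq0.le) _
        calc volume {x : Euc d | ENNReal.ofReal t < maximalFn d f x}
            ≤ ENNReal.ofReal ((5 : ℝ) ^ d) * I * (ENNReal.ofReal t)⁻¹ :=
              maximalFn_weak11 d hd f hIlt ht
          _ = W * (ENNReal.ofReal t)⁻¹ := by rw [hW]
      · rw [Set.indicator_of_notMem (fun h => absurd h.2 (not_le.2 hta))]
        simp [hμ0 t hta.le, ENNReal.zero_rpow_of_pos hrq0]
    have hstep2 : ∫⁻ t in Ioi (0 : ℝ), (Ioc (0 : ℝ) A).indicator G t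
        = ∫⁻ t in Ioc (0 : ℝ) A, G t := by
      rw [lintegral_indicator measurableSet_Ioc, Measure.restrict_restrict measurableSet_Ioc,
        Set.inter_eq_left.2 Ioc_subset_Ioi_self]
    have hstep3 : ∫⁻ t in Ioc (0 : ℝ) A, G t
        = W ^ (r / q) * ∫⁻ t in Ioc (0 : ℝ) A, ENNReal.ofReal (t ^ (β - 1)) := by
      rw [← lintegral_const_mul' _ _ (ENNReal.rpow_ne_top_of_nonneg hrq0.le hWt)]
      refine setLIntegral_congr_fun measurableSet_Ioc ?_
      intro t ht
      obtain ⟨ht0, htA⟩ := ht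
      have hreal : t ^ (r - 1) * (t ^ (r / q))⁻¹ = t ^ (β - 1) := by
        rw [← Real.rpow_neg ht0.le, ← Real.rpow_add ht0]
        congr 1; rw [hβ]; ring
      calc G t = ENNReal.ofReal (t ^ (r - 1)) *
            (W ^ (r / q) * ((ENNReal.ofReal t) ^ (r / q))⁻¹) := by
            simp only [hG]
            rw [ENNReal.mul_rpow_of_nonneg _ _ hrq0.le, ENNReal.inv_rpow]
        _ = W ^ (r / q) * (ENNReal.ofReal (t ^ (r - 1)) * ENNReal.ofReal ((t ^ (r / q))⁻¹)) := by
            rw [ENNReal.ofReal_rpow_of_pos ht0,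
              ← ENNReal.ofReal_inv_of_pos (Real.rpow_pos_of_pos ht0 _)]
            ring
        _ = W ^ (r / q) * ENNReal.ofReal (t ^ (β - 1)) := by
            rw [← ENNReal.ofReal_mul (by positivity), hreal]
    have hβ1 : (-1 : ℝ) < β - 1 := by linarith
    have hintg : IntegrableOn (fun t : ℝ => t ^ (β - 1)) (Ioc 0 A) volume :=
      (intervalIntegral.intervalIntegrable_rpow' hβ1).1
    have hstep4 : ∫⁻ t in Ioc (0 : ℝ) A, ENNReal.ofReal (t ^ (β - 1))
        = ENNReal.ofReal (A ^ β / β) := by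
      rw [← ofReal_integral_eq_lintegral_ofReal hintg
        ((ae_restrict_iff' measurableSet_Ioc).2
          (ae_of_all _ fun t ht => Real.rpow_nonneg ht.1.le _))]
      congr 1
      rw [← intervalIntegral.integral_of_le hA0, integral_rpow (Or.inl hβ1)]
      have hb : β - 1 + 1 = β := by ring
      rw [hb, Real.zero_rpow hβ0.ne', sub_zero]
    have hCr : C ^ r = q * ((5 : ℝ) ^ d) ^ (r / q) / β := by
      rw [hC, ← Real.rpow_mul hCbase.le, one_div_mul_cancel hr.ne', Real.rpow_one]
    have hRHSeq : ENNReal.ofReal (C ^ r) =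
        ENNReal.ofReal q * (ENNReal.ofReal ((5 : ℝ) ^ d)) ^ (r / q) * ENNReal.ofReal β⁻¹ := by
      rw [hCr, div_eq_mul_inv, ENNReal.ofReal_mul (by positivity),
        ENNReal.ofReal_mul (by positivity),
        ENNReal.ofReal_rpow_of_nonneg (by positivity) hrq0.le]
    have hAβ : ENNReal.ofReal (A ^ β / β) = N ^ β * ENNReal.ofReal β⁻¹ := by
      rw [div_eq_mul_inv, ENNReal.ofReal_mul (by positivity)]
      congr 1
      rw [← ENNReal.ofReal_rpow_of_nonneg hA0 hβ0.le, ENNReal.ofReal_toReal hNt]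
    have hfinal : ENNReal.ofReal q * (∫⁻ t in Ioi (0 : ℝ), ENNReal.ofReal (t ^ (r - 1)) *
          (volume {x : Euc d | ENNReal.ofReal t < maximalFn d f x}) ^ (r / q))
        ≤ ENNReal.ofReal (C ^ r) * N ^ β * I ^ (r / q) := by
      calc ENNReal.ofReal q * (∫⁻ t in Ioi (0 : ℝ), ENNReal.ofReal (t ^ (r - 1)) *
            (volume {x : Euc d | ENNReal.ofReal t < maximalFn d f x}) ^ (r / q))
          ≤ ENNReal.ofReal q * (W ^ (r / q) * ENNReal.ofReal (A ^ β / β)) := by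
            refine mul_le_mul_right ?_ _
            calc _ ≤ _ := hstep1
              _ = _ := hstep2
              _ = _ := hstep3
              _ = W ^ (r / q) * ENNReal.ofReal (A ^ β / β) := by rw [hstep4]
        _ = ENNReal.ofReal (C ^ r) * N ^ β * I ^ (r / q) := by
            rw [hRHSeq, hAβ, hW, ENNReal.mul_rpow_of_nonneg _ _ hrq0.le]
            ring
    calc (ENNReal.ofReal q * ∫⁻ t in Ioi (0 : ℝ), ENNReal.ofReal (t ^ (r - 1)) *
          (volume {x : Euc d | ENNReal.ofReal t < maximalFn d f x}) ^ (r / q)) ^ (1 / r)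
        ≤ (ENNReal.ofReal (C ^ r) * N ^ β * I ^ (r / q)) ^ (1 / r) :=
          ENNReal.rpow_le_rpow hfinal (by positivity)
      _ = ENNReal.ofReal C * N ^ (1 - 1 / q) * I ^ (1 / q) := by
          rw [ENNReal.mul_rpow_of_nonneg _ _ (by positivity),
            ENNReal.mul_rpow_of_nonneg _ _ (by positivity),
            ← ENNReal.rpow_mul N, ← ENNReal.rpow_mul I,
            ENNReal.ofReal_rpow_of_nonneg (by positivity) (by positivity),
            ← Real.rpow_mul hC0.le]
          rw [show β * (1 / r) = 1 - 1 / q by rw [hβ]; field_simp,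
            show r / q * (1 / r) = 1 / q by field_simp,
            show r * (1 / r) = 1 by field_simp, Real.rpow_one]
end

section
/- Let d ≥ 1 and α ∈ (0,1). There exists a constant C = C(α,d) > 0 such that for every smooth function u ∈ C^∞(ℝ^d) ∩ W^{1,1}(ℝ^d) and every x ∈ ℝ^d, one has ∫_{ℝ^d} |u(x) − u(y)| |x−y|^{−(d+1−α)} dy ≤ C (M(|∇u|)(x))^{1−α} (M(u)(x))^{α}. -/
open MeasureTheory Metric Set
open scoped ENNReal NNReal

noncomputable section PI8Aux

variable {d : ℕ}

lemma euc_nontrivial (hd : 1 ≤ d) : Nontrivial (Euc d) := by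
  have i : Fin d := ⟨0, hd⟩
  refine ⟨⟨EuclideanSpace.single i (1:ℝ), 0, fun h => ?_⟩⟩
  have h2 := congrArg (fun v => v i) h
  simp [EuclideanSpace.single_apply] at h2

lemma vol_ball (hd : 1 ≤ d) (x : Euc d) {r : ℝ} (hr : 0 ≤ r) :
    volume (ball x r) = ENNReal.ofReal (r ^ d) * volume (ball (0 : Euc d) 1) := by
  haveI := euc_nontrivial hd
  rw [Measure.addHaar_ball volume x hr, finrank_euclideanSpace_fin]

lemma setLIntegral_le_maximal (f : Euc d → ℝ) (x : Euc d) {r : ℝ} (hr : 0 < r) :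
    ∫⁻ y in ball x r, (‖f y‖₊ : ℝ≥0∞) ≤ volume (ball x r) * maximalFn d f x := by
  have h0 : volume (ball x r) ≠ 0 := (measure_ball_pos _ _ hr).ne'
  have htop : volume (ball x r) ≠ ∞ := measure_ball_lt_top.ne
  have hle : (volume (ball x r))⁻¹ * ∫⁻ y in ball x r, (‖f y‖₊ : ℝ≥0∞) ≤ maximalFn d f x :=
    le_iSup₂ (f := fun (r : ℝ) (_ : 0 < r) =>
      (volume (ball x r))⁻¹ * ∫⁻ y in ball x r, (‖f y‖₊ : ℝ≥0∞)) r hr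
  calc ∫⁻ y in ball x r, (‖f y‖₊ : ℝ≥0∞)
      = volume (ball x r) * ((volume (ball x r))⁻¹ * ∫⁻ y in ball x r, (‖f y‖₊ : ℝ≥0∞)) := by
        rw [← mul_assoc, ENNReal.mul_inv_cancel h0 htop, one_mul]
    _ ≤ _ := mul_le_mul_right hle _

lemma pointwise_le_maximal {f : Euc d → ℝ} (hf : Continuous f) (x : Euc d) :
    ENNReal.ofReal |f x| ≤ maximalFn d f x := by
  have key : ∀ ε : ℝ, 0 < ε → ENNReal.ofReal (|f x| - ε) ≤ maximalFn d f x := by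
    intro ε hε
    obtain ⟨δ, hδ, hball⟩ := Metric.continuous_iff.mp hf x ε hε
    have hlow : ∀ y ∈ ball x δ, ENNReal.ofReal (|f x| - ε) ≤ (‖f y‖₊ : ℝ≥0∞) := by
      intro y hy
      rw [show (‖f y‖₊ : ℝ≥0∞) = ENNReal.ofReal |f y| from Real.enorm_eq_ofReal_abs _]
      apply ENNReal.ofReal_le_ofReal
      have := hball y hy
      have : |f y - f x| < ε := by rwa [Real.dist_eq] at this
      have := abs_sub_abs_le_abs_sub (f x) (f y)
      rw [abs_sub_comm] at this
      linarith
    have h0 : volume (ball x δ) ≠ 0 := (measure_ball_pos _ _ hδ).ne'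
    have htop : volume (ball x δ) ≠ ∞ := measure_ball_lt_top.ne
    have hint : ENNReal.ofReal (|f x| - ε) * volume (ball x δ)
        ≤ ∫⁻ y in ball x δ, (‖f y‖₊ : ℝ≥0∞) := by
      rw [← setLIntegral_const (ball x δ) (ENNReal.ofReal (|f x| - ε))]
      exact setLIntegral_mono_ae (by fun_prop) (ae_of_all _ hlow)
    have : ENNReal.ofReal (|f x| - ε)
        ≤ (volume (ball x δ))⁻¹ * ∫⁻ y in ball x δ, (‖f y‖₊ : ℝ≥0∞) := by
      have heq : ENNReal.ofReal (|f x| - ε)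
          = (volume (ball x δ))⁻¹ * volume (ball x δ) * ENNReal.ofReal (|f x| - ε) := by
        rw [ENNReal.inv_mul_cancel h0 htop, one_mul]
      rw [heq, mul_assoc]
      exact mul_le_mul_right (by rwa [mul_comm] at hint) _
    exact this.trans (le_iSup₂ (f := fun (r : ℝ) (_ : 0 < r) =>
      (volume (ball x r))⁻¹ * ∫⁻ y in ball x r, (‖f y‖₊ : ℝ≥0∞)) δ hδ)
  rcases eq_top_or_lt_top (maximalFn d f x) with htop | hlt
  · simp [htop]
  · have h2 : ∀ ε : ℝ, 0 < ε → |f x| - ε ≤ (maximalFn d f x).toReal := by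
      intro ε hε
      have := key ε hε
      rcases le_or_gt (|f x| - ε) 0 with h | h
      · exact h.trans ENNReal.toReal_nonneg
      · exact (ENNReal.ofReal_le_iff_le_toReal hlt.ne).mp (by rwa [])
    have : |f x| ≤ (maximalFn d f x).toReal := by
      by_contra hcon
      push_neg at hcon
      have := h2 ((|f x| - (maximalFn d f x).toReal) / 2) (by linarith)
      linarith
    calc ENNReal.ofReal |f x| ≤ ENNReal.ofReal (maximalFn d f x).toReal :=
          ENNReal.ofReal_le_ofReal this
      _ = maximalFn d f x := ENNReal.ofReal_toReal hlt.ne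

lemma eq_zero_of_maximal_zero {f : Euc d → ℝ} (hf : Continuous f) (x : Euc d)
    (h : maximalFn d f x = 0) : ∀ y, f y = 0 := by
  have hball : ∀ r : ℝ, 0 < r → ∫⁻ y in ball x r, (‖f y‖₊ : ℝ≥0∞) = 0 := by
    intro r hr
    have hle : (volume (ball x r))⁻¹ * ∫⁻ y in ball x r, (‖f y‖₊ : ℝ≥0∞) ≤ maximalFn d f x :=
      le_iSup₂ (f := fun (r : ℝ) (_ : 0 < r) =>
        (volume (ball x r))⁻¹ * ∫⁻ y in ball x r, (‖f y‖₊ : ℝ≥0∞)) r hr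
    rw [h, le_zero_iff, mul_eq_zero] at hle
    rcases hle with h1 | h2
    · exact absurd h1 (ENNReal.inv_ne_zero.mpr measure_ball_lt_top.ne)
    · exact h2
  have huniv : ∫⁻ y, (‖f y‖₊ : ℝ≥0∞) = 0 := by
    have hsub : (univ : Set (Euc d)) ⊆ ⋃ n : ℕ, ball x (n + 1) := by
      intro y _
      obtain ⟨n, hn⟩ := exists_nat_gt (dist y x)
      exact mem_iUnion.mpr ⟨n, by simp [mem_ball]; linarith⟩
    have : ∫⁻ y, (‖f y‖₊ : ℝ≥0∞) ≤ ∑' n : ℕ, ∫⁻ y in ball x ((n : ℝ) + 1), (‖f y‖₊ : ℝ≥0∞) := by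
      rw [← setLIntegral_univ]
      exact (lintegral_mono_set (f := fun y => (‖f y‖₊ : ℝ≥0∞)) hsub).trans
        (lintegral_iUnion_le _ _)
    refine le_antisymm (this.trans ?_) zero_le
    simp [hball _ (by positivity : (0:ℝ) < (_ : ℕ) + 1)]
  have hae : f =ᵐ[volume] 0 := by
    have := (lintegral_eq_zero_iff (by fun_prop)).mp huniv
    filter_upwards [this] with y hy
    simpa using hy
  intro y
  have := hf.ae_eq_iff_eq volume continuous_const |>.mp hae
  exact congrFun this y

lemma exists_annulus_far {r s : ℝ} (hr : 0 < r) (h : r ≤ s) :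
    ∃ k : ℕ, 2 ^ k * r ≤ s ∧ s < 2 ^ (k + 1) * r := by
  have hex : ∃ n : ℕ, s < 2 ^ n * r := by
    obtain ⟨n, hn⟩ := pow_unbounded_of_one_lt (s / r) (one_lt_two (α := ℝ))
    exact ⟨n, by rwa [div_lt_iff₀ hr] at hn⟩
  classical
  have hn0 : Nat.find hex ≠ 0 := by
    intro h0
    have := Nat.find_spec hex
    rw [h0] at this
    simp at this
    linarith
  obtain ⟨k, hk⟩ : ∃ k, Nat.find hex = k + 1 := ⟨Nat.find hex - 1, (Nat.succ_pred_eq_of_pos (Nat.pos_of_ne_zero hn0)).symm⟩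
  refine ⟨k, ?_, ?_⟩
  · have := Nat.find_min hex (m := k) (by omega)
    push_neg at this
    exact this
  · have := Nat.find_spec hex
    rwa [hk] at this

lemma exists_annulus_near {r s : ℝ} (h0 : 0 < s) (h : s < r) :
    ∃ k : ℕ, (2:ℝ)⁻¹ ^ (k + 1) * r ≤ s ∧ s < (2:ℝ)⁻¹ ^ k * r := by
  have hex : ∃ n : ℕ, (2:ℝ)⁻¹ ^ n * r ≤ s := by
    obtain ⟨n, hn⟩ := pow_unbounded_of_one_lt (r / s) (one_lt_two (α := ℝ))
    refine ⟨n, ?_⟩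
    rw [div_lt_iff₀ h0] at hn
    rw [inv_pow]
    rw [inv_mul_le_iff₀ (by positivity)]
    nlinarith
  classical
  have hn0 : Nat.find hex ≠ 0 := by
    intro hzero
    have := Nat.find_spec hex
    rw [hzero] at this
    simp at this
    linarith
  obtain ⟨k, hk⟩ : ∃ k, Nat.find hex = k + 1 := ⟨Nat.find hex - 1, (Nat.succ_pred_eq_of_pos (Nat.pos_of_ne_zero hn0)).symm⟩
  refine ⟨k, ?_, ?_⟩
  · have := Nat.find_spec hex
    rwa [hk] at this
  · have := Nat.find_min hex (m := k) (by omega)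
    push_neg at this
    exact this

lemma tsum_ofReal_geom (c q : ℝ) (hc : 0 ≤ c) (hq0 : 0 ≤ q) (hq1 : q < 1) :
    ∑' k : ℕ, ENNReal.ofReal (c * q ^ k) = ENNReal.ofReal (c * (1 - q)⁻¹) := by
  have h1 : ∀ k : ℕ, ENNReal.ofReal (c * q ^ k)
      = ENNReal.ofReal c * (ENNReal.ofReal q) ^ k := by
    intro k
    rw [ENNReal.ofReal_mul hc, ENNReal.ofReal_pow hq0]
  simp_rw [h1]
  rw [ENNReal.tsum_mul_left, ENNReal.tsum_geometric]
  rw [ENNReal.ofReal_mul hc]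
  congr 1
  rw [← ENNReal.ofReal_one, ← ENNReal.ofReal_sub _ hq0, ENNReal.ofReal_inv_of_pos (by linarith)]

lemma two_npow_rpow (n : ℕ) : (2:ℝ) ^ n = (2:ℝ) ^ (n:ℝ) :=
  (Real.rpow_natCast 2 n).symm

lemma two_inv_npow_rpow (n : ℕ) : ((2:ℝ)⁻¹) ^ n = (2:ℝ) ^ (-(n:ℝ)) := by
  rw [inv_pow, two_npow_rpow, ← Real.rpow_neg (by norm_num)]

lemma comb {r : ℝ} (hr : 0 < r) (E F E' F' : ℝ) :
    ((2:ℝ) ^ E * r ^ F) * ((2:ℝ) ^ E' * r ^ F') = 2 ^ (E + E') * r ^ (F + F') := by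
  rw [Real.rpow_add two_pos, Real.rpow_add hr]; ring

lemma far_coef_calc (k : ℕ) {d : ℕ} {r α : ℝ} (hr : 0 < r) :
    (((2:ℝ) ^ k * r) ^ ((d:ℝ) + 1 - α))⁻¹ * ((2:ℝ) ^ (k+1) * r) ^ d * 2
      = (2 ^ (d+1) * r ^ (α - 1)) * ((2:ℝ) ^ (α - 1)) ^ k := by
  have h2 : (0:ℝ) < 2 := two_pos
  have e1 : (((2:ℝ) ^ k * r) ^ ((d:ℝ) + 1 - α))⁻¹
      = (2:ℝ) ^ (-((k:ℝ) * ((d:ℝ) + 1 - α))) * r ^ (-((d:ℝ) + 1 - α)) := by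
    rw [Real.mul_rpow (by positivity) hr.le, mul_inv, two_npow_rpow k,
        ← Real.rpow_mul h2.le, ← Real.rpow_neg (by positivity), ← Real.rpow_neg hr.le]
  have e2 : ((2:ℝ) ^ (k+1) * r) ^ d = (2:ℝ) ^ (((k:ℝ)+1) * (d:ℝ)) * r ^ ((d:ℝ)) := by
    rw [← Real.rpow_natCast ((2:ℝ) ^ (k+1) * r) d, Real.mul_rpow (by positivity) hr.le,
        two_npow_rpow (k+1), ← Real.rpow_mul h2.le]
    push_cast
    ring_nf
  have e3 : ((2:ℝ) ^ (α - 1)) ^ k = (2:ℝ) ^ ((α - 1) * (k:ℝ)) := by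
    rw [← Real.rpow_natCast ((2:ℝ) ^ (α-1)) k, ← Real.rpow_mul h2.le]
  have e4 : (2:ℝ) ^ (d+1) = (2:ℝ) ^ ((d:ℝ) + 1) := by
    rw [two_npow_rpow (d+1)]; push_cast; ring_nf
  rw [e1, e2, e3, e4, comb hr]
  have e5 : (2:ℝ) ^ ((d:ℝ) + 1) * r ^ (α - 1) * (2:ℝ) ^ ((α - 1) * (k:ℝ))
      = ((2:ℝ) ^ ((d:ℝ) + 1) * (2:ℝ) ^ ((α - 1) * (k:ℝ))) * r ^ (α - 1) := by ring
  rw [e5, ← Real.rpow_add h2]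
  have e6 : (2:ℝ) ^ (-((k:ℝ) * ((d:ℝ) + 1 - α)) + ((k:ℝ)+1) * (d:ℝ)) * r ^ (-((d:ℝ) + 1 - α) + (d:ℝ)) * 2
      = (2:ℝ) ^ ((-((k:ℝ) * ((d:ℝ) + 1 - α)) + ((k:ℝ)+1) * (d:ℝ)) + 1) * r ^ (-((d:ℝ) + 1 - α) + (d:ℝ)) := by
    rw [Real.rpow_add h2 _ 1, Real.rpow_one]; ring
  rw [e6]
  congr 1
  · congr 1; ring
  · congr 1; ring

lemma near_coef_calc (k : ℕ) {d : ℕ} {r α : ℝ} (hr : 0 < r) :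
    ((2:ℝ)⁻¹ ^ (k+1) * r) ^ (α - (d:ℝ)) * ((2:ℝ)⁻¹ ^ k * r) ^ d
      = ((2:ℝ) ^ ((d:ℝ) - α) * r ^ α) * ((2:ℝ) ^ (-α)) ^ k := by
  have h2 : (0:ℝ) < 2 := two_pos
  have e1 : ((2:ℝ)⁻¹ ^ (k+1) * r) ^ (α - (d:ℝ))
      = (2:ℝ) ^ (-((k:ℝ)+1) * (α - (d:ℝ))) * r ^ (α - (d:ℝ)) := by
    rw [Real.mul_rpow (by positivity) hr.le, two_inv_npow_rpow (k+1), ← Real.rpow_mul h2.le]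
    push_cast
    ring_nf
  have e2 : ((2:ℝ)⁻¹ ^ k * r) ^ d = (2:ℝ) ^ (-(k:ℝ) * (d:ℝ)) * r ^ ((d:ℝ)) := by
    rw [← Real.rpow_natCast ((2:ℝ)⁻¹ ^ k * r) d, Real.mul_rpow (by positivity) hr.le,
        two_inv_npow_rpow k, ← Real.rpow_mul h2.le]
  have e3 : ((2:ℝ) ^ (-α)) ^ k = (2:ℝ) ^ (-α * (k:ℝ)) := by
    rw [← Real.rpow_natCast ((2:ℝ) ^ (-α)) k, ← Real.rpow_mul h2.le]
  rw [e1, e2, e3, comb hr]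
  have e5 : (2:ℝ) ^ ((d:ℝ) - α) * r ^ α * (2:ℝ) ^ (-α * (k:ℝ))
      = ((2:ℝ) ^ ((d:ℝ) - α) * (2:ℝ) ^ (-α * (k:ℝ))) * r ^ α := by ring
  rw [e5, ← Real.rpow_add h2]
  congr 1
  · congr 1; ring
  · congr 1; ring

lemma norm_gradient_eq {u : Euc d → ℝ} (z : Euc d) : ‖gradient u z‖ = ‖fderiv ℝ u z‖ := by
  unfold gradient
  exact LinearIsometryEquiv.norm_map _ _

lemma ftc_bound {u : Euc d → ℝ} (hu : ContDiff ℝ (⊤ : ℕ∞) u) (x y : Euc d) :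
    |u x - u y| ≤ ‖x - y‖ * ∫ t in Ioc (0:ℝ) 1, ‖gradient u (x + t • (y - x))‖ := by
  set ℓ : ℝ → Euc d := fun t => x + t • (y - x) with hℓ
  have hℓcont : Continuous ℓ := by fun_prop
  have hder : ∀ t : ℝ, HasDerivAt ℓ (y - x) t := by
    intro t
    have h1 : HasDerivAt (fun t : ℝ => t • (y - x)) ((1:ℝ) • (y - x)) t :=
      (hasDerivAt_id t).smul_const (y - x)
    rw [one_smul] at h1
    exact h1.const_add x
  have hdiff : Differentiable ℝ u := hu.differentiable (by simp)
  have hφ : ∀ t ∈ uIcc (0:ℝ) 1, HasDerivAt (fun s => u (ℓ s))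
      ((fderiv ℝ u (ℓ t)) (y - x)) t := fun t _ =>
    (hdiff (ℓ t)).hasFDerivAt.comp_hasDerivAt t (hder t)
  have hcont : Continuous fun t : ℝ => (fderiv ℝ u (ℓ t)) (y - x) :=
    ((hu.continuous_fderiv (by simp)).comp hℓcont).clm_apply continuous_const
  have hint : IntervalIntegrable (fun t : ℝ => (fderiv ℝ u (ℓ t)) (y - x)) volume 0 1 :=
    hcont.intervalIntegrable 0 1
  have hftc := intervalIntegral.integral_eq_sub_of_hasDerivAt hφ hint
  have hℓ1 : ℓ 1 = y := by simp [hℓ]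
  have hℓ0 : ℓ 0 = x := by simp [hℓ]
  rw [hℓ1, hℓ0] at hftc
  have habs : |u x - u y| = |∫ t in (0:ℝ)..1, (fderiv ℝ u (ℓ t)) (y - x)| := by
    rw [hftc, abs_sub_comm]
  rw [habs]
  have hgcont : Continuous fun t : ℝ => ‖gradient u (ℓ t)‖ * ‖y - x‖ := by
    have : Continuous fun z : Euc d => ‖gradient u z‖ := by
      have : Continuous fun z : Euc d => ‖fderiv ℝ u z‖ :=
        (hu.continuous_fderiv (by simp)).norm
      simpa [norm_gradient_eq] using this
    exact (this.comp hℓcont).mul continuous_const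
  calc |∫ t in (0:ℝ)..1, (fderiv ℝ u (ℓ t)) (y - x)|
      ≤ ∫ t in (0:ℝ)..1, |(fderiv ℝ u (ℓ t)) (y - x)| :=
        intervalIntegral.abs_integral_le_integral_abs zero_le_one
    _ ≤ ∫ t in (0:ℝ)..1, ‖gradient u (ℓ t)‖ * ‖y - x‖ := by
        apply intervalIntegral.integral_mono_on zero_le_one
          (hcont.abs.intervalIntegrable 0 1) (hgcont.intervalIntegrable 0 1)
        intro t _
        rw [norm_gradient_eq]
        exact ((fderiv ℝ u (ℓ t)).le_opNorm (y - x)).trans (le_refl _)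
    _ = ‖x - y‖ * ∫ t in Ioc (0:ℝ) 1, ‖gradient u (ℓ t)‖ := by
        rw [intervalIntegral.integral_mul_const, intervalIntegral.integral_of_le zero_le_one,
          norm_sub_rev]
        ring

lemma map_add_left_vol (c : Euc d) :
    Measure.map (fun z : Euc d => c + z) volume = volume :=
  map_add_left_eq_self volume c

lemma lintegral_comp_affine (x : Euc d) {t : ℝ} (ht : 0 < t) {H : Euc d → ℝ≥0∞}
    (hH : Measurable H) :
    ∫⁻ y, H (x + t • (y - x)) = ENNReal.ofReal ((t ^ d)⁻¹) * ∫⁻ z, H z := by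
  have hmap : Measure.map (fun y : Euc d => t • y) volume
      = ENNReal.ofReal ((t ^ d)⁻¹) • volume := by
    have := Measure.map_addHaar_smul (volume : Measure (Euc d)) ht.ne'
    rw [finrank_euclideanSpace_fin] at this
    rw [this]
    congr 1
    rw [abs_of_nonneg (by positivity)]
  have hcomp : ∀ y : Euc d, x + t • (y - x) = (x - t • x) + t • y := by
    intro y
    rw [smul_sub]
    abel
  simp_rw [hcomp]
  have h1 : ∫⁻ y, H ((x - t • x) + t • y)
      = ∫⁻ z, H ((x - t • x) + z) ∂(Measure.map (fun y : Euc d => t • y) volume) := by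
    exact (lintegral_map (hH.comp (measurable_const_add _)) (measurable_const_smul t)).symm
  rw [h1, hmap, lintegral_smul_measure]
  congr 1
  have h2 : ∫⁻ z, H ((x - t • x) + z)
      = ∫⁻ z, H z ∂(Measure.map (fun z : Euc d => (x - t • x) + z) volume) := by
    rw [lintegral_map hH (measurable_const_add _)]
  rw [h2, map_add_left_vol _]

lemma continuous_grad_norm {u : Euc d → ℝ} (hu : ContDiff ℝ (⊤ : ℕ∞) u) :
    Continuous fun z : Euc d => ‖gradient u z‖ := by
  have : Continuous fun z : Euc d => ‖fderiv ℝ u z‖ := (hu.continuous_fderiv (by simp)).norm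
  simpa [norm_gradient_eq] using this

lemma avg_line_integral_le (hd : 1 ≤ d) {u : Euc d → ℝ} (hu : ContDiff ℝ (⊤ : ℕ∞) u) (x : Euc d)
    {ρ : ℝ} (hρ : 0 < ρ) :
    ∫⁻ y in ball x ρ, ENNReal.ofReal (∫ t in Ioc (0:ℝ) 1, ‖gradient u (x + t • (y - x))‖)
      ≤ volume (ball x ρ) * maximalFn d (fun z => ‖gradient u z‖) x := by
  set g : Euc d → ℝ := fun z => ‖gradient u z‖ with hg
  have hgc : Continuous g := continuous_grad_norm hu
  set M := maximalFn d g x with hM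
  -- step 1: pass to double lintegral
  have step1 : ∀ y : Euc d,
      ENNReal.ofReal (∫ t in Ioc (0:ℝ) 1, g (x + t • (y - x)))
        = ∫⁻ t in Ioc (0:ℝ) 1, ENNReal.ofReal (g (x + t • (y - x))) := by
    intro y
    apply ofReal_integral_eq_lintegral_ofReal
    · exact (hgc.comp (by fun_prop)).integrableOn_Ioc
    · exact ae_of_all _ fun t => norm_nonneg _
  change ∫⁻ y in ball x ρ, ENNReal.ofReal (∫ t in Ioc (0:ℝ) 1, g (x + t • (y - x))) ≤ _
  simp_rw [step1]
  -- step 2: swap integrals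
  have hswap : ∫⁻ y in ball x ρ, ∫⁻ t in Ioc (0:ℝ) 1, ENNReal.ofReal (g (x + t • (y - x)))
      = ∫⁻ t in Ioc (0:ℝ) 1, ∫⁻ y in ball x ρ, ENNReal.ofReal (g (x + t • (y - x))) := by
    apply lintegral_lintegral_swap
    apply Continuous.aemeasurable
    have : Continuous fun p : Euc d × ℝ => g (x + p.2 • (p.1 - x)) := by
      apply hgc.comp
      fun_prop
    exact (ENNReal.continuous_ofReal.comp this).comp (continuous_id)
  rw [hswap]
  -- step 3: bound inner integral for each t in Ioc 0 1
  have step3 : ∀ t : ℝ, t ∈ Ioc (0:ℝ) 1 →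
      ∫⁻ y in ball x ρ, ENNReal.ofReal (g (x + t • (y - x)))
        ≤ volume (ball x ρ) * M := by
    intro t ⟨ht0, ht1⟩
    set H : Euc d → ℝ≥0∞ := (ball x (t * ρ)).indicator fun z => ENNReal.ofReal (g z) with hH
    have hHmeas : Measurable H :=
      Measurable.indicator (by fun_prop) measurableSet_ball
    have hmem : ∀ y : Euc d, y ∈ ball x ρ ↔ x + t • (y - x) ∈ ball x (t * ρ) := by
      intro y
      simp only [mem_ball, dist_eq_norm]
      constructor
      · intro h
        have : ‖x + t • (y - x) - x‖ = t * ‖y - x‖ := by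
          rw [add_sub_cancel_left, norm_smul, Real.norm_eq_abs, abs_of_pos ht0]
        rw [this]
        have : ‖y - x‖ < ρ := by rwa [← dist_eq_norm, dist_eq_norm] at h
        nlinarith
      · intro h
        have heq : ‖x + t • (y - x) - x‖ = t * ‖y - x‖ := by
          rw [add_sub_cancel_left, norm_smul, Real.norm_eq_abs, abs_of_pos ht0]
        rw [heq] at h
        have := (mul_lt_mul_iff_right₀ ht0).mp h
        rwa [← dist_eq_norm] at this ⊢
    have key : ∫⁻ y in ball x ρ, ENNReal.ofReal (g (x + t • (y - x)))
        = ∫⁻ y, H (x + t • (y - x)) := by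
      rw [← lintegral_indicator measurableSet_ball]
      congr 1
      funext y
      by_cases hy : y ∈ ball x ρ
      · rw [indicator_of_mem hy, hH, indicator_of_mem ((hmem y).mp hy)]
      · rw [indicator_of_notMem hy, hH, indicator_of_notMem (fun hc => hy ((hmem y).mpr hc))]
    rw [key, lintegral_comp_affine x ht0 hHmeas]
    have : ∫⁻ z, H z = ∫⁻ z in ball x (t * ρ), ENNReal.ofReal (g z) := by
      rw [hH, lintegral_indicator measurableSet_ball]
    rw [this]
    have hgnn : ∀ z, ENNReal.ofReal (g z) = (‖g z‖₊ : ℝ≥0∞) := by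
      intro z
      rw [show (‖g z‖₊ : ℝ≥0∞) = ENNReal.ofReal |g z| from Real.enorm_eq_ofReal_abs _, abs_of_nonneg (norm_nonneg _)]
    simp_rw [hgnn]
    have htρ : 0 < t * ρ := mul_pos ht0 hρ
    calc ENNReal.ofReal ((t ^ d)⁻¹) * ∫⁻ z in ball x (t * ρ), (‖g z‖₊ : ℝ≥0∞)
        ≤ ENNReal.ofReal ((t ^ d)⁻¹) * (volume (ball x (t * ρ)) * M) :=
          mul_le_mul_right (setLIntegral_le_maximal g x htρ) _
      _ = ENNReal.ofReal ((t ^ d)⁻¹) * (ENNReal.ofReal ((t * ρ) ^ d)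
            * volume (ball (0 : Euc d) 1) * M) := by rw [vol_ball hd x htρ.le]
      _ = (ENNReal.ofReal ((t ^ d)⁻¹) * ENNReal.ofReal ((t * ρ) ^ d))
            * volume (ball (0 : Euc d) 1) * M := by ring
      _ = ENNReal.ofReal (ρ ^ d) * volume (ball (0 : Euc d) 1) * M := by
          rw [← ENNReal.ofReal_mul (by positivity)]
          congr 2
          rw [mul_pow]
          field_simp
      _ = volume (ball x ρ) * M := by rw [vol_ball hd x hρ.le]
  calc ∫⁻ t in Ioc (0:ℝ) 1, ∫⁻ y in ball x ρ, ENNReal.ofReal (g (x + t • (y - x)))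
      ≤ ∫⁻ _ in Ioc (0:ℝ) 1, volume (ball x ρ) * M := by
        apply lintegral_mono_ae
        rw [ae_restrict_iff' measurableSet_Ioc]
        exact ae_of_all _ step3
    _ = volume (ball x ρ) * M * volume (Ioc (0:ℝ) 1) := setLIntegral_const _ _
    _ = volume (ball x ρ) * M := by
        rw [Real.volume_Ioc]
        norm_num

lemma far_bound (hd : 1 ≤ d) {α : ℝ} (hα0 : 0 < α) (hα1 : α < 1)
    {u : Euc d → ℝ} (hu : Continuous u) (x : Euc d) {r : ℝ} (hr : 0 < r) :
    ∫⁻ y in (ball x r)ᶜ, ENNReal.ofReal (|u x - u y| / ‖x - y‖ ^ ((d:ℝ) + 1 - α))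
      ≤ ENNReal.ofReal ((2 ^ (d+1) * (1 - (2:ℝ) ^ (α - 1))⁻¹) * r ^ (α - 1)) *
          (volume (ball (0 : Euc d) 1) * maximalFn d u x) := by
  set e : ℝ := (d:ℝ) + 1 - α with he
  have he0 : 0 ≤ e := by simp only [he]; linarith
  set F : Euc d → ℝ≥0∞ := fun y => ENNReal.ofReal (|u x - u y| / ‖x - y‖ ^ e) with hF
  set A : ℕ → Set (Euc d) := fun k => ball x (2 ^ (k+1) * r) \ ball x (2 ^ k * r) with hA
  set B := maximalFn d u x with hB
  set V1 := volume (ball (0 : Euc d) 1) with hV1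
  have hcover : (ball x r)ᶜ ⊆ ⋃ k, A k := by
    intro y hy
    have hge : r ≤ dist y x := not_lt.mp (by simpa [mem_ball] using hy)
    obtain ⟨k, hk1, hk2⟩ := exists_annulus_far hr hge
    exact mem_iUnion.mpr ⟨k, by simp [hA, mem_ball, not_lt, hk1, hk2]⟩
  have hannulus : ∀ k : ℕ, ∫⁻ y in A k, F y
      ≤ ENNReal.ofReal ((2 ^ (d+1) * r ^ (α-1)) * ((2:ℝ) ^ (α - 1)) ^ k) * (V1 * B) := by
    intro k
    set c : ℝ := 2 ^ k * r with hc
    have hcpos : 0 < c := by positivity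
    set q : ℝ≥0∞ := ENNReal.ofReal ((c ^ e)⁻¹) with hq
    have hpt : ∀ y ∈ A k, F y ≤ (ENNReal.ofReal |u x| + ENNReal.ofReal |u y|) * q := by
      intro y hy
      obtain ⟨hy1, hy2⟩ := hy
      have hge : c ≤ dist y x := not_lt.mp (by simpa [mem_ball] using hy2)
      have hnorm : c ≤ ‖x - y‖ := by rwa [← dist_eq_norm, dist_comm]
      have hcepos : 0 < c ^ e := Real.rpow_pos_of_pos hcpos e
      have hle1 : |u x - u y| / ‖x - y‖ ^ e ≤ (|u x| + |u y|) / c ^ e := by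
        apply div_le_div₀ (by positivity) _ hcepos (Real.rpow_le_rpow hcpos.le hnorm he0)
        have := abs_add_le (u x) (-(u y)); rw [← sub_eq_add_neg, abs_neg] at this; exact this
      refine (ENNReal.ofReal_le_ofReal hle1).trans ?_
      rw [div_eq_mul_inv, ENNReal.ofReal_mul (by positivity), ENNReal.ofReal_add (abs_nonneg _) (abs_nonneg _)]
    have hAmeas : MeasurableSet (A k) := measurableSet_ball.diff measurableSet_ball
    have hsub : A k ⊆ ball x (2 ^ (k+1) * r) := diff_subset
    have hstep : ∫⁻ y in A k, F y
        ≤ ∫⁻ y in A k, (ENNReal.ofReal |u x| + ENNReal.ofReal |u y|) * q := by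
      apply lintegral_mono_ae
      rw [ae_restrict_iff' hAmeas]
      exact ae_of_all _ hpt
    have hsplit : ∫⁻ y in A k, (ENNReal.ofReal |u x| + ENNReal.ofReal |u y|) * q
        = ((∫⁻ y in A k, ENNReal.ofReal |u x|) + ∫⁻ y in A k, ENNReal.ofReal |u y|) * q := by
      simp_rw [add_mul]
      rw [lintegral_add_left (by fun_prop), setLIntegral_const,
        lintegral_mul_const' q _ ENNReal.ofReal_ne_top, setLIntegral_const]
      ring
    have hterm1 : ∫⁻ y in A k, ENNReal.ofReal |u x| ≤ volume (ball x (2 ^ (k+1) * r)) * B := by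
      rw [setLIntegral_const]
      calc ENNReal.ofReal |u x| * volume (A k)
          ≤ B * volume (ball x (2 ^ (k+1) * r)) :=
            mul_le_mul' (pointwise_le_maximal hu x) (measure_mono hsub)
        _ = volume (ball x (2 ^ (k+1) * r)) * B := mul_comm _ _
    have hterm2 : ∫⁻ y in A k, ENNReal.ofReal |u y| ≤ volume (ball x (2 ^ (k+1) * r)) * B := by
      have : ∀ y : Euc d, ENNReal.ofReal |u y| = (‖u y‖₊ : ℝ≥0∞) := fun y =>
        (Real.enorm_eq_ofReal_abs (u y)).symm
      simp_rw [this]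
      exact (lintegral_mono_set hsub).trans (setLIntegral_le_maximal u x (by positivity))
    have hvol : volume (ball x (2 ^ (k+1) * r)) = ENNReal.ofReal (((2:ℝ) ^ (k+1) * r) ^ d) * V1 :=
      vol_ball hd x (by positivity)
    calc ∫⁻ y in A k, F y
        ≤ ((∫⁻ y in A k, ENNReal.ofReal |u x|) + ∫⁻ y in A k, ENNReal.ofReal |u y|) * q := by
          rw [← hsplit]; exact hstep
      _ ≤ (volume (ball x (2 ^ (k+1) * r)) * B + volume (ball x (2 ^ (k+1) * r)) * B) * q :=
          mul_le_mul_left (add_le_add hterm1 hterm2) q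
      _ = q * ENNReal.ofReal (((2:ℝ) ^ (k+1) * r) ^ d) * 2 * (V1 * B) := by
          rw [hvol]; ring
      _ = ENNReal.ofReal ((c ^ e)⁻¹ * ((2:ℝ) ^ (k+1) * r) ^ d * 2) * (V1 * B) := by
          congr 1
          rw [ENNReal.ofReal_mul (by positivity), ENNReal.ofReal_mul (by positivity)]
          congr 1
          norm_num
      _ = ENNReal.ofReal ((2 ^ (d+1) * r ^ (α-1)) * ((2:ℝ) ^ (α - 1)) ^ k) * (V1 * B) := by
          rw [hc, he, far_coef_calc k hr]
  calc ∫⁻ y in (ball x r)ᶜ, F y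
      ≤ ∫⁻ y in ⋃ k, A k, F y := lintegral_mono_set hcover
    _ ≤ ∑' k, ∫⁻ y in A k, F y := lintegral_iUnion_le _ _
    _ ≤ ∑' k, ENNReal.ofReal ((2 ^ (d+1) * r ^ (α-1)) * ((2:ℝ) ^ (α - 1)) ^ k) * (V1 * B) :=
        ENNReal.tsum_le_tsum hannulus
    _ = (∑' k, ENNReal.ofReal ((2 ^ (d+1) * r ^ (α-1)) * ((2:ℝ) ^ (α - 1)) ^ k)) * (V1 * B) :=
        ENNReal.tsum_mul_right
    _ = ENNReal.ofReal ((2 ^ (d+1) * r ^ (α-1)) * (1 - (2:ℝ) ^ (α - 1))⁻¹) * (V1 * B) := by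
        rw [tsum_ofReal_geom _ _ (by positivity) (by positivity)
          (Real.rpow_lt_one_of_one_lt_of_neg one_lt_two (by linarith))]
    _ = ENNReal.ofReal ((2 ^ (d+1) * (1 - (2:ℝ) ^ (α - 1))⁻¹) * r ^ (α - 1)) * (V1 * B) := by
        congr 2
        ring

lemma near_bound (hd : 1 ≤ d) {α : ℝ} (hα0 : 0 < α) (hα1 : α < 1)
    {u : Euc d → ℝ} (hu : ContDiff ℝ (⊤ : ℕ∞) u) (x : Euc d) {r : ℝ} (hr : 0 < r) :
    ∫⁻ y in ball x r, ENNReal.ofReal (|u x - u y| / ‖x - y‖ ^ ((d:ℝ) + 1 - α))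
      ≤ ENNReal.ofReal ((2 ^ ((d:ℝ) - α) * (1 - (2:ℝ) ^ (-α))⁻¹) * r ^ α) *
          (volume (ball (0 : Euc d) 1) * maximalFn d (fun z => ‖gradient u z‖) x) := by
  set e : ℝ := (d:ℝ) + 1 - α with he
  set F : Euc d → ℝ≥0∞ := fun y => ENNReal.ofReal (|u x - u y| / ‖x - y‖ ^ e) with hF
  set G : Euc d → ℝ := fun y => ∫ t in Ioc (0:ℝ) 1, ‖gradient u (x + t • (y - x))‖ with hG
  set Mg := maximalFn d (fun z => ‖gradient u z‖) x with hMg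
  set V1 := volume (ball (0 : Euc d) 1) with hV1
  set A : ℕ → Set (Euc d) := fun k =>
    ball x ((2:ℝ)⁻¹ ^ k * r) \ ball x ((2:ℝ)⁻¹ ^ (k+1) * r) with hA
  haveI := euc_nontrivial hd
  have hGnn : ∀ y, 0 ≤ G y := fun y => integral_nonneg fun t => norm_nonneg _
  -- the singleton {x} contributes nothing
  have hsingle : ∫⁻ y in ({x} : Set (Euc d)), F y = 0 := by
    rw [Measure.restrict_eq_zero.mpr (measure_singleton x), lintegral_zero_measure]
  have hsubset : ball x r ⊆ (ball x r \ {x}) ∪ {x} := by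
    intro y hy
    by_cases h : y = x
    · exact Or.inr (by simp [h])
    · exact Or.inl ⟨hy, by simp [h]⟩
  have hcover : ball x r \ {x} ⊆ ⋃ k, A k := by
    intro y ⟨hy1, hy2⟩
    have hpos : 0 < dist y x := dist_pos.mpr (by simpa using hy2)
    have hlt : dist y x < r := by simpa [mem_ball] using hy1
    obtain ⟨k, hk1, hk2⟩ := exists_annulus_near hpos hlt
    exact mem_iUnion.mpr ⟨k, ⟨mem_ball.mpr hk2, fun hc => (not_lt.mpr hk1) (mem_ball.mp hc)⟩⟩
  have hannulus : ∀ k : ℕ, ∫⁻ y in A k, F y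
      ≤ ENNReal.ofReal (((2:ℝ) ^ ((d:ℝ) - α) * r ^ α) * ((2:ℝ) ^ (-α)) ^ k) * (V1 * Mg) := by
    intro k
    set ℓk : ℝ := (2:ℝ)⁻¹ ^ (k+1) * r with hℓk
    set ρk : ℝ := (2:ℝ)⁻¹ ^ k * r with hρk
    have hℓpos : 0 < ℓk := by positivity
    have hρpos : 0 < ρk := by positivity
    have hpt : ∀ y ∈ A k, F y ≤ ENNReal.ofReal (ℓk ^ (α - (d:ℝ))) * ENNReal.ofReal (G y) := by
      intro y hy
      obtain ⟨hy1, hy2⟩ := hy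
      have hge : ℓk ≤ dist y x := not_lt.mp (fun hc => hy2 (mem_ball.mpr hc))
      have hnorm : ℓk ≤ ‖x - y‖ := by rwa [← dist_eq_norm, dist_comm]
      have hnpos : 0 < ‖x - y‖ := lt_of_lt_of_le hℓpos hnorm
      have hftc := ftc_bound hu x y
      have h1 : |u x - u y| / ‖x - y‖ ^ e ≤ (‖x - y‖ * G y) / ‖x - y‖ ^ e := by
        gcongr
      have h2 : (‖x - y‖ * G y) / ‖x - y‖ ^ e = G y * ‖x - y‖ ^ (α - (d:ℝ)) := by
        have hxe : ‖x - y‖ ^ (α - (d:ℝ)) = ‖x - y‖ / ‖x - y‖ ^ e := by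
          rw [show α - (d:ℝ) = 1 - e by rw [he]; ring, Real.rpow_sub hnpos 1 e, Real.rpow_one]
        rw [hxe]
        ring
      have h3 : ‖x - y‖ ^ (α - (d:ℝ)) ≤ ℓk ^ (α - (d:ℝ)) := by
        apply Real.rpow_le_rpow_of_nonpos hℓpos hnorm
        have : (1:ℝ) ≤ (d:ℝ) := by exact_mod_cast hd
        linarith
      have h4 : |u x - u y| / ‖x - y‖ ^ e ≤ G y * ℓk ^ (α - (d:ℝ)) := by
        refine (h1.trans_eq h2).trans ?_
        exact mul_le_mul_of_nonneg_left h3 (hGnn y)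
      calc F y ≤ ENNReal.ofReal (G y * ℓk ^ (α - (d:ℝ))) := ENNReal.ofReal_le_ofReal h4
        _ = ENNReal.ofReal (ℓk ^ (α - (d:ℝ))) * ENNReal.ofReal (G y) := by
            rw [ENNReal.ofReal_mul (hGnn y)]
            ring
    have hAmeas : MeasurableSet (A k) := measurableSet_ball.diff measurableSet_ball
    have hsub : A k ⊆ ball x ρk := diff_subset
    calc ∫⁻ y in A k, F y
        ≤ ∫⁻ y in A k, ENNReal.ofReal (ℓk ^ (α - (d:ℝ))) * ENNReal.ofReal (G y) := by
          apply lintegral_mono_ae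
          rw [ae_restrict_iff' hAmeas]
          exact ae_of_all _ hpt
      _ = ENNReal.ofReal (ℓk ^ (α - (d:ℝ))) * ∫⁻ y in A k, ENNReal.ofReal (G y) :=
          lintegral_const_mul' _ _ ENNReal.ofReal_ne_top
      _ ≤ ENNReal.ofReal (ℓk ^ (α - (d:ℝ))) * ∫⁻ y in ball x ρk, ENNReal.ofReal (G y) :=
          mul_le_mul_right (lintegral_mono_set hsub) _
      _ ≤ ENNReal.ofReal (ℓk ^ (α - (d:ℝ))) * (volume (ball x ρk) * Mg) :=
          mul_le_mul_right (avg_line_integral_le hd hu x hρpos) _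
      _ = ENNReal.ofReal (ℓk ^ (α - (d:ℝ))) * (ENNReal.ofReal (ρk ^ d) * V1 * Mg) := by
          rw [vol_ball hd x hρpos.le]
      _ = (ENNReal.ofReal (ℓk ^ (α - (d:ℝ))) * ENNReal.ofReal (ρk ^ d)) * (V1 * Mg) := by
          ring
      _ = ENNReal.ofReal (((2:ℝ) ^ ((d:ℝ) - α) * r ^ α) * ((2:ℝ) ^ (-α)) ^ k) * (V1 * Mg) := by
          rw [← ENNReal.ofReal_mul (by positivity), hℓk, hρk, near_coef_calc k hr]
  calc ∫⁻ y in ball x r, F y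
      ≤ (∫⁻ y in ball x r \ {x}, F y) + ∫⁻ y in ({x} : Set (Euc d)), F y :=
        (lintegral_mono_set hsubset).trans (lintegral_union_le _ _ _)
    _ = ∫⁻ y in ball x r \ {x}, F y := by rw [hsingle, add_zero]
    _ ≤ ∑' k, ∫⁻ y in A k, F y :=
        (lintegral_mono_set hcover).trans (lintegral_iUnion_le _ _)
    _ ≤ ∑' k, ENNReal.ofReal (((2:ℝ) ^ ((d:ℝ) - α) * r ^ α) * ((2:ℝ) ^ (-α)) ^ k) * (V1 * Mg) :=
        ENNReal.tsum_le_tsum hannulus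
    _ = (∑' k, ENNReal.ofReal (((2:ℝ) ^ ((d:ℝ) - α) * r ^ α) * ((2:ℝ) ^ (-α)) ^ k)) * (V1 * Mg) :=
        ENNReal.tsum_mul_right
    _ = ENNReal.ofReal (((2:ℝ) ^ ((d:ℝ) - α) * r ^ α) * (1 - (2:ℝ) ^ (-α))⁻¹) * (V1 * Mg) := by
        rw [tsum_ofReal_geom _ _ (by positivity) (by positivity)
          (Real.rpow_lt_one_of_one_lt_of_neg one_lt_two (by linarith))]
    _ = ENNReal.ofReal ((2 ^ ((d:ℝ) - α) * (1 - (2:ℝ) ^ (-α))⁻¹) * r ^ α) * (V1 * Mg) := by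
        congr 2
        ring

end PI8Aux

/-- Pointwise Maz'ya–Shaposhnikova interpolation inequality. -/
theorem pointwise_interpolation_fracD (d : ℕ) (hd : 1 ≤ d)
    (α : ℝ) (hα0 : 0 < α) (hα1 : α < 1) :
    ∃ C : ℝ, 0 < C ∧
      ∀ u : Euc d → ℝ, ContDiff ℝ (⊤ : ℕ∞) u → Integrable u volume →
        Integrable (gradient u) volume → ∀ x : Euc d,
          fracD d α u x ≤
            ENNReal.ofReal C * (maximalFn d (fun y => ‖gradient u y‖) x) ^ (1 - α) *
              (maximalFn d u x) ^ α := by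
  haveI := euc_nontrivial hd
  set K1 : ℝ := 2 ^ (d+1) * (1 - (2:ℝ) ^ (α - 1))⁻¹ with hK1
  set K2 : ℝ := 2 ^ ((d:ℝ) - α) * (1 - (2:ℝ) ^ (-α))⁻¹ with hK2
  set V1 : ℝ≥0∞ := volume (ball (0 : Euc d) 1) with hV1
  have hV1pos : 0 < V1 := measure_ball_pos _ _ one_pos
  have hV1top : V1 ≠ ⊤ := measure_ball_lt_top.ne
  set V : ℝ := V1.toReal with hV
  have hVpos : 0 < V := ENNReal.toReal_pos hV1pos.ne' hV1top
  have hq1 : (2:ℝ) ^ (α - 1) < 1 :=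
    Real.rpow_lt_one_of_one_lt_of_neg one_lt_two (by linarith)
  have hq2 : (2:ℝ) ^ (-α) < 1 :=
    Real.rpow_lt_one_of_one_lt_of_neg one_lt_two (by linarith)
  have hK1pos : 0 < K1 := by
    rw [hK1]
    have : (0:ℝ) < (1 - (2:ℝ) ^ (α - 1)) := by linarith
    positivity
  have hK2pos : 0 < K2 := by
    rw [hK2]
    have : (0:ℝ) < (1 - (2:ℝ) ^ (-α)) := by linarith
    positivity
  refine ⟨(K1 + K2) * V, by positivity, ?_⟩
  intro u hu huint hgint x
  set MA := maximalFn d (fun y => ‖gradient u y‖) x with hMA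
  set MB := maximalFn d u x with hMB
  -- the main estimate, valid for every r > 0
  have main : ∀ r : ℝ, 0 < r → fracD d α u x
      ≤ ENNReal.ofReal (K2 * r ^ α) * (V1 * MA) + ENNReal.ofReal (K1 * r ^ (α-1)) * (V1 * MB) := by
    intro r hr
    have hsplit : fracD d α u x
        = (∫⁻ y in ball x r, ENNReal.ofReal (|u x - u y| / ‖x - y‖ ^ ((d:ℝ) + 1 - α)))
          + ∫⁻ y in (ball x r)ᶜ, ENNReal.ofReal (|u x - u y| / ‖x - y‖ ^ ((d:ℝ) + 1 - α)) :=
      (lintegral_add_compl _ measurableSet_ball).symm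
    rw [hsplit]
    exact add_le_add (near_bound hd hα0 hα1 hu x hr) (far_bound hd hα0 hα1 hu.continuous x hr)
  -- degenerate case: u identically zero
  have hzero_case : (∀ y, u y = 0) → fracD d α u x ≤
      ENNReal.ofReal ((K1 + K2) * V) * MA ^ (1 - α) * MB ^ α := by
    intro hz
    have : fracD d α u x = 0 := by
      have : fracD d α u x
          = ∫⁻ y, ENNReal.ofReal (|u x - u y| / ‖x - y‖ ^ ((d:ℝ) + 1 - α)) := rfl
      rw [this]
      simp [hz]
    rw [this]
    exact zero_le
  by_cases hMA0 : MA = 0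
  · -- gradient vanishes identically, so u is constant, hence 0 by integrability
    apply hzero_case
    have hg0 : ∀ y, ‖gradient u y‖ = 0 :=
      eq_zero_of_maximal_zero (continuous_grad_norm hu) x hMA0
    have hf0 : ∀ y, fderiv ℝ u y = 0 := by
      intro y
      have := hg0 y
      rw [norm_gradient_eq] at this
      exact norm_eq_zero.mp this
    have hconst : ∀ y z : Euc d, u y = u z :=
      is_const_of_fderiv_eq_zero (hu.differentiable (by simp)) hf0
    have huconst : u = fun _ => u x := funext fun y => hconst y x
    have hvoluniv : (volume : Measure (Euc d)) univ = ∞ := by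
      haveI : NoncompactSpace (Euc d) := RealNormedSpace.noncompactSpace _
      exact measure_univ_of_isAddLeftInvariant volume
    rw [huconst] at huint
    rcases (integrable_const_iff).mp huint with hc | hfin
    · intro y
      rw [huconst]
      exact hc
    · exact absurd (measure_lt_top volume univ) (by rw [hvoluniv]; simp)
  by_cases hMB0 : MB = 0
  · exact hzero_case (eq_zero_of_maximal_zero hu.continuous x hMB0)
  by_cases hMAtop : MA = ⊤
  · have : ENNReal.ofReal ((K1 + K2) * V) * MA ^ (1 - α) * MB ^ α = ⊤ := by
      rw [hMAtop, ENNReal.top_rpow_of_pos (by linarith)]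
      rw [ENNReal.mul_top (by simp [ENNReal.ofReal_eq_zero]; nlinarith)]
      rw [ENNReal.top_mul]
      simp only [ne_eq, ENNReal.rpow_eq_zero_iff]
      push_neg
      constructor
      · intro h; exact absurd h hMB0
      · intro h; linarith
    rw [this]
    exact le_top
  by_cases hMBtop : MB = ⊤
  · have : ENNReal.ofReal ((K1 + K2) * V) * MA ^ (1 - α) * MB ^ α = ⊤ := by
      rw [hMBtop, ENNReal.top_rpow_of_pos (by linarith)]
      rw [ENNReal.mul_top]
      simp only [ne_eq, mul_eq_zero, not_or, ENNReal.rpow_eq_zero_iff]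
      constructor
      · simp [ENNReal.ofReal_eq_zero]; nlinarith
      · push_neg
        constructor
        · intro h; exact absurd h hMA0
        · intro h; exact absurd h hMAtop
    rw [this]
    exact le_top
  -- main case
  set a : ℝ := MA.toReal with ha'
  set b : ℝ := MB.toReal with hb'
  have ha : 0 < a := ENNReal.toReal_pos hMA0 hMAtop
  have hb : 0 < b := ENNReal.toReal_pos hMB0 hMBtop
  have hMAa : MA = ENNReal.ofReal a := (ENNReal.ofReal_toReal hMAtop).symm
  have hMBb : MB = ENNReal.ofReal b := (ENNReal.ofReal_toReal hMBtop).symm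
  have hVV1 : V1 = ENNReal.ofReal V := (ENNReal.ofReal_toReal hV1top).symm
  have hr : 0 < b / a := div_pos hb ha
  refine (main (b / a) hr).trans ?_
  have e1 : (b/a) ^ α * a = a ^ (1-α) * b ^ α := by
    have h1 : a ^ (1-α) = a / a ^ α := by rw [Real.rpow_sub ha, Real.rpow_one]
    rw [Real.div_rpow hb.le ha.le, h1]
    field_simp
  have e2 : (b/a) ^ (α-1) * b = a ^ (1-α) * b ^ α := by
    have h1 : a ^ (1-α) = a / a ^ α := by rw [Real.rpow_sub ha, Real.rpow_one]
    have h2 : b ^ (α-1) = b ^ α / b := by rw [Real.rpow_sub hb, Real.rpow_one]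
    have h3 : a ^ (α-1) = a ^ α / a := by rw [Real.rpow_sub ha, Real.rpow_one]
    rw [Real.div_rpow hb.le ha.le, h1, h2, h3]
    have hapow : (0:ℝ) < a ^ α := Real.rpow_pos_of_pos ha α
    have hbpow : (0:ℝ) < b ^ α := Real.rpow_pos_of_pos hb α
    field_simp
  have lhs_eq : ENNReal.ofReal (K2 * (b/a) ^ α) * (V1 * MA)
      + ENNReal.ofReal (K1 * (b/a) ^ (α-1)) * (V1 * MB)
      = ENNReal.ofReal ((K1 + K2) * V * (a ^ (1-α) * b ^ α)) := by
    rw [hVV1, hMAa, hMBb]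
    rw [← ENNReal.ofReal_mul hVpos.le, ← ENNReal.ofReal_mul (by positivity),
        ← ENNReal.ofReal_mul hVpos.le, ← ENNReal.ofReal_mul (by positivity),
        ← ENNReal.ofReal_add (by positivity) (by positivity)]
    congr 1
    calc K2 * (b/a) ^ α * (V * a) + K1 * (b/a) ^ (α-1) * (V * b)
        = K2 * V * ((b/a) ^ α * a) + K1 * V * ((b/a) ^ (α-1) * b) := by ring
      _ = K2 * V * (a ^ (1-α) * b ^ α) + K1 * V * (a ^ (1-α) * b ^ α) := by rw [e1, e2]
      _ = (K1 + K2) * V * (a ^ (1-α) * b ^ α) := by ring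
  rw [lhs_eq]
  rw [hMAa, hMBb, ENNReal.ofReal_rpow_of_pos ha, ENNReal.ofReal_rpow_of_pos hb,
      ← ENNReal.ofReal_mul (by positivity), ← ENNReal.ofReal_mul (by positivity)]
  exact ENNReal.ofReal_le_ofReal (le_of_eq (by ring))
end

section
/- Let d ≥ 1 and α ∈ (0,1). There exists a constant C = C(α,d) > 0 such that for every continuous function u ∈ L^1(ℝ^d), every x ∈ ℝ^d, and every r > 0, one has ∫_{ℝ^d \ B(x,r)} |u(x) − u(y)| |x−y|^{−(d+1−α)} dy ≤ C r^{α−1} M(u)(x). -/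
open MeasureTheory Metric Set
open scoped ENNReal NNReal

lemma avg_le_max (d : ℕ) (u : Euc d → ℝ) (x : Euc d) {ρ : ℝ} (hρ : 0 < ρ) :
    ∫⁻ y in ball x ρ, (‖u y‖₊ : ℝ≥0∞) ≤ volume (ball x ρ) * maximalFn d u x := by
  have h : (volume (ball x ρ))⁻¹ * ∫⁻ y in ball x ρ, (‖u y‖₊ : ℝ≥0∞) ≤ maximalFn d u x :=
    le_iSup₂ (f := fun r (_ : 0 < r) => (volume (ball x r))⁻¹ * ∫⁻ y in ball x r, (‖u y‖₊ : ℝ≥0∞)) ρ hρ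
  have hv0 : volume (ball x ρ) ≠ 0 := (measure_ball_pos volume x hρ).ne'
  have hvt : volume (ball x ρ) ≠ ⊤ := measure_ball_lt_top.ne
  calc ∫⁻ y in ball x ρ, (‖u y‖₊ : ℝ≥0∞)
      = volume (ball x ρ) * ((volume (ball x ρ))⁻¹ * ∫⁻ y in ball x ρ, (‖u y‖₊ : ℝ≥0∞)) := by
        rw [← mul_assoc, ENNReal.mul_inv_cancel hv0 hvt, one_mul]
    _ ≤ volume (ball x ρ) * maximalFn d u x := mul_le_mul_right h _

lemma point_le_max (d : ℕ) (u : Euc d → ℝ) (hu : Continuous u) (x : Euc d) :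
    ENNReal.ofReal |u x| ≤ maximalFn d u x := by
  refine ENNReal.le_of_forall_pos_le_add fun ε hε _ => ?_
  -- find ρ with |u y| ≥ |u x| - ε on ball x ρ
  have hc : ∀ᶠ y in nhds x, |u y - u x| < (ε : ℝ) := by
    have := Metric.tendsto_nhds.mp (hu.tendsto x) ε (by exact_mod_cast hε)
    simpa [Real.dist_eq] using this
  obtain ⟨ρ, hρ, hball⟩ := Metric.eventually_nhds_iff_ball.mp hc
  have key : ENNReal.ofReal (|u x| - ε) ≤ maximalFn d u x := by
    have hpt : ∀ y ∈ ball x ρ, ENNReal.ofReal (|u x| - ε) ≤ (‖u y‖₊ : ℝ≥0∞) := by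
      intro y hy
      have h1 : |u x| - ε ≤ |u y| := by
        have := hball y hy
        have h2 : |u x| - |u y| ≤ |u x - u y| := abs_sub_abs_le_abs_sub _ _
        rw [abs_sub_comm] at this
        linarith
      calc ENNReal.ofReal (|u x| - ε) ≤ ENNReal.ofReal |u y| := ENNReal.ofReal_le_ofReal h1
        _ = (‖u y‖₊ : ℝ≥0∞) := by rw [← Real.norm_eq_abs, ofReal_norm, enorm_eq_nnnorm]
    have hint : volume (ball x ρ) * ENNReal.ofReal (|u x| - ε)
        ≤ ∫⁻ y in ball x ρ, (‖u y‖₊ : ℝ≥0∞) := by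
      rw [mul_comm, ← setLIntegral_const]
      exact setLIntegral_mono' measurableSet_ball hpt
    have hv0 : volume (ball x ρ) ≠ 0 := (measure_ball_pos volume x hρ).ne'
    have hvt : volume (ball x ρ) ≠ ⊤ := measure_ball_lt_top.ne
    have : ENNReal.ofReal (|u x| - ε)
        ≤ (volume (ball x ρ))⁻¹ * ∫⁻ y in ball x ρ, (‖u y‖₊ : ℝ≥0∞) := by
      calc ENNReal.ofReal (|u x| - ε)
          = (volume (ball x ρ))⁻¹ * (volume (ball x ρ) * ENNReal.ofReal (|u x| - ε)) := by
            rw [← mul_assoc, ENNReal.inv_mul_cancel hv0 hvt, one_mul]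
        _ ≤ _ := mul_le_mul_right hint _
    exact this.trans (le_iSup₂ (f := fun r (_ : 0 < r) =>
      (volume (ball x r))⁻¹ * ∫⁻ y in ball x r, (‖u y‖₊ : ℝ≥0∞)) ρ hρ)
  calc ENNReal.ofReal |u x| ≤ ENNReal.ofReal (|u x| - ε) + ENNReal.ofReal ε := by
        exact (ENNReal.ofReal_le_ofReal (by linarith : |u x| ≤ (|u x| - ε) + ε)).trans ENNReal.ofReal_add_le
    _ ≤ maximalFn d u x + ε := by
        gcongr
        simp [ENNReal.ofReal_coe_nnreal]

/-- Far-field part of the pointwise interpolation estimate. -/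
theorem pointwise_farfield_estimate (d : ℕ) (hd : 1 ≤ d)
    (α : ℝ) (hα0 : 0 < α) (hα1 : α < 1) :
    ∃ C : ℝ, 0 < C ∧
      ∀ u : Euc d → ℝ, Continuous u → Integrable u volume →
        ∀ x : Euc d, ∀ r : ℝ, 0 < r →
          ∫⁻ y in (ball x r)ᶜ, ENNReal.ofReal (|u x - u y| / ‖x - y‖ ^ ((d : ℝ) + 1 - α)) ≤
            ENNReal.ofReal C * ENNReal.ofReal (r ^ (α - 1)) * maximalFn d u x := by
  classical
  haveI : Nonempty (Fin d) := Fin.pos_iff_nonempty.mp hd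
  set β : ℝ := (d : ℝ) + 1 - α with hβdef
  have hdR : (1:ℝ) ≤ (d:ℝ) := by exact_mod_cast hd
  have hβ : 0 < β := by simp only [hβdef]; linarith
  set q : ℝ := (2:ℝ) ^ (α - 1) with hqdef
  have hq0 : 0 < q := Real.rpow_pos_of_pos two_pos _
  have hq1 : q < 1 := Real.rpow_lt_one_of_one_lt_of_neg one_lt_two (by linarith)
  have h1q : 0 < 1 - q := by linarith
  set v : ℝ≥0∞ := volume (ball (0 : Euc d) 1) with hvdef
  have hv0 : v ≠ 0 := (measure_ball_pos volume _ one_pos).ne'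
  have hvt : v ≠ ⊤ := measure_ball_lt_top.ne
  have hvr : 0 < v.toReal := ENNReal.toReal_pos hv0 hvt
  refine ⟨2 * (2:ℝ) ^ (2 * (d:ℝ)) * v.toReal / (1 - q), by positivity, ?_⟩
  intro u hu hui x r hr
  set M := maximalFn d u x with hM
  set A : ℕ → Set (Euc d) := fun k => closedBall x (2^(k+1)*r) \ ball x (2^k*r) with hAdef
  -- cover
  have cover : (ball x r)ᶜ ⊆ ⋃ k : ℕ, A k := by
    intro y hy
    have hy' : r ≤ dist y x := by simpa [mem_ball, not_lt] using hy
    have hP : ∃ n : ℕ, dist y x ≤ 2^(n+1) * r := by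
      obtain ⟨n, hn⟩ := pow_unbounded_of_one_lt (dist y x / r) (one_lt_two (α := ℝ))
      refine ⟨n, ?_⟩
      have h1 : dist y x < 2^n * r := by rwa [div_lt_iff₀ hr] at hn
      have h2 : (2:ℝ)^n ≤ 2^(n+1) := pow_le_pow_right₀ one_le_two (Nat.le_succ n)
      nlinarith
    refine mem_iUnion.mpr ⟨Nat.find hP, mem_closedBall.mpr (Nat.find_spec hP), ?_⟩
    intro hmem
    rcases Nat.eq_zero_or_pos (Nat.find hP) with h0 | hpos
    · rw [h0] at hmem
      have := mem_ball.mp hmem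
      simp only [pow_zero, one_mul] at this
      linarith
    · have hk1 : Nat.find hP - 1 < Nat.find hP := Nat.sub_lt hpos one_pos
      have hmin := Nat.find_min hP hk1
      have heq : Nat.find hP - 1 + 1 = Nat.find hP := by omega
      rw [heq] at hmin
      exact hmin (le_of_lt (mem_ball.mp hmem))
  -- key real computation
  have key : ∀ k : ℕ, ((2:ℝ)^(k+2)*r)^d * ((((2:ℝ)^k*r)^β)⁻¹) = q^k * ((2:ℝ)^(2*(d:ℝ)) * r^(α-1)) := by
    intro k
    have h2 : (0:ℝ) < 2 := two_pos
    have h2k : (0:ℝ) < (2:ℝ)^k := by positivity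
    rw [mul_pow, Real.mul_rpow h2k.le hr.le, mul_inv,
        ← Real.rpow_natCast ((2:ℝ)^(k+2)) d, ← Real.rpow_natCast (2:ℝ) (k+2),
        ← Real.rpow_mul h2.le,
        ← Real.rpow_natCast (2:ℝ) k, ← Real.rpow_mul h2.le,
        ← Real.rpow_neg h2.le,
        ← Real.rpow_natCast r d, ← Real.rpow_neg hr.le,
        hqdef, ← Real.rpow_natCast ((2:ℝ)^(α-1)) k, ← Real.rpow_mul h2.le,
        mul_mul_mul_comm, ← Real.rpow_add h2, ← Real.rpow_add hr,
        ← mul_assoc, mul_comm ((2:ℝ)^((α-1)*(k:ℝ))) ((2:ℝ)^(2*(d:ℝ))), ← Real.rpow_add h2]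
    congr 1
    · congr 1; rw [hβdef]; push_cast; ring
    · congr 1; rw [hβdef]; push_cast; ring
  -- per annulus bound
  set K : ℝ≥0∞ := ENNReal.ofReal ((2:ℝ)^(2*(d:ℝ)) * r^(α-1)) * (2 * v * M) with hKdef
  have perk : ∀ k : ℕ, (∫⁻ y in A k, ENNReal.ofReal (|u x - u y| / ‖x - y‖ ^ β))
      ≤ ENNReal.ofReal (q^k) * K := by
    intro k
    have hrk : (0:ℝ) < (2:ℝ)^k * r := by positivity
    have hρk : (0:ℝ) < (2:ℝ)^(k+2) * r := by positivity
    set ck : ℝ≥0∞ := ENNReal.ofReal ((((2:ℝ)^k*r)^β)⁻¹) with hckdef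
    have hsub : A k ⊆ ball x ((2:ℝ)^(k+2)*r) := by
      intro y hy
      have h1 : dist y x ≤ 2^(k+1)*r := mem_closedBall.mp hy.1
      have h2 : (2:ℝ)^(k+1)*r < 2^(k+2)*r := by
        have : (2:ℝ)^(k+1) < 2^(k+2) := pow_lt_pow_right₀ one_lt_two (Nat.lt_succ_self _)
        exact mul_lt_mul_of_pos_right this hr
      exact mem_ball.mpr (h1.trans_lt h2)
    have hpt : ∀ y ∈ A k, ENNReal.ofReal (|u x - u y| / ‖x - y‖ ^ β)
        ≤ (ENNReal.ofReal |u x| + (‖u y‖₊ : ℝ≥0∞)) * ck := by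
      intro y hy
      have hdy : (2:ℝ)^k * r ≤ ‖x - y‖ := by
        have h2 := hy.2
        simp only [mem_ball, not_lt] at h2
        rw [← dist_eq_norm, dist_comm]; exact h2
      have hreal : |u x - u y| / ‖x - y‖ ^ β ≤ (|u x| + |u y|) * ((((2:ℝ)^k*r)^β)⁻¹) := by
        rw [← div_eq_mul_inv]
        exact div_le_div₀ (by positivity) (abs_sub _ _)
          (Real.rpow_pos_of_pos hrk β) (Real.rpow_le_rpow hrk.le hdy hβ.le)
      calc ENNReal.ofReal (|u x - u y| / ‖x - y‖ ^ β)
          ≤ ENNReal.ofReal ((|u x| + |u y|) * ((((2:ℝ)^k*r)^β)⁻¹)) :=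
            ENNReal.ofReal_le_ofReal hreal
        _ = (ENNReal.ofReal |u x| + ENNReal.ofReal |u y|) * ck := by
            rw [ENNReal.ofReal_mul (by positivity), ENNReal.ofReal_add (abs_nonneg _) (abs_nonneg _)]
        _ = (ENNReal.ofReal |u x| + (‖u y‖₊ : ℝ≥0∞)) * ck := by
            rw [← Real.norm_eq_abs (u y), ofReal_norm, enorm_eq_nnnorm]
    have hvol : volume (ball x ((2:ℝ)^(k+2)*r)) = ENNReal.ofReal (((2:ℝ)^(k+2)*r)^d) * v := by
      rw [Measure.addHaar_ball volume x hρk.le, finrank_euclideanSpace_fin]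
    have hcomb : ENNReal.ofReal (((2:ℝ)^(k+2)*r)^d) * ck = ENNReal.ofReal (q^k) * ENNReal.ofReal ((2:ℝ)^(2*(d:ℝ)) * r^(α-1)) := by
      rw [hckdef, ← ENNReal.ofReal_mul (by positivity), key k, ENNReal.ofReal_mul (by positivity)]
    calc (∫⁻ y in A k, ENNReal.ofReal (|u x - u y| / ‖x - y‖ ^ β))
        ≤ ∫⁻ y in A k, (ENNReal.ofReal |u x| + (‖u y‖₊ : ℝ≥0∞)) * ck :=
          setLIntegral_mono' (measurableSet_closedBall.diff measurableSet_ball) hpt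
      _ ≤ ∫⁻ y in ball x ((2:ℝ)^(k+2)*r), (ENNReal.ofReal |u x| + (‖u y‖₊ : ℝ≥0∞)) * ck :=
          lintegral_mono_set hsub
      _ = (∫⁻ y in ball x ((2:ℝ)^(k+2)*r), (ENNReal.ofReal |u x| + (‖u y‖₊ : ℝ≥0∞))) * ck :=
          lintegral_mul_const' _ _ ENNReal.ofReal_ne_top
      _ = (ENNReal.ofReal |u x| * volume (ball x ((2:ℝ)^(k+2)*r))
            + ∫⁻ y in ball x ((2:ℝ)^(k+2)*r), (‖u y‖₊ : ℝ≥0∞)) * ck := by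
          rw [lintegral_add_left measurable_const, setLIntegral_const]
      _ ≤ (M * volume (ball x ((2:ℝ)^(k+2)*r)) + volume (ball x ((2:ℝ)^(k+2)*r)) * M) * ck := by
          gcongr
          · exact point_le_max d u hu x
          · exact avg_le_max d u x hρk
      _ = volume (ball x ((2:ℝ)^(k+2)*r)) * (2 * M) * ck := by ring
      _ = ENNReal.ofReal (((2:ℝ)^(k+2)*r)^d) * ck * (2 * v * M) := by rw [hvol]; ring
      _ = ENNReal.ofReal (q^k) * K := by rw [hcomb, hKdef]; ring
  -- sum up
  have hsum : ∑' k : ℕ, ENNReal.ofReal (q^k) = ENNReal.ofReal ((1-q)⁻¹) := by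
    have : ∀ k : ℕ, ENNReal.ofReal (q^k) = (ENNReal.ofReal q)^k := fun k =>
      ENNReal.ofReal_pow hq0.le k
    simp_rw [this, ENNReal.tsum_geometric]
    rw [ENNReal.ofReal_inv_of_pos h1q, ENNReal.ofReal_sub 1 hq0.le, ENNReal.ofReal_one]
  calc ∫⁻ y in (ball x r)ᶜ, ENNReal.ofReal (|u x - u y| / ‖x - y‖ ^ ((d:ℝ) + 1 - α))
      ≤ ∫⁻ y in ⋃ k : ℕ, A k, ENNReal.ofReal (|u x - u y| / ‖x - y‖ ^ β) :=
        lintegral_mono_set cover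
    _ ≤ ∑' k : ℕ, ∫⁻ y in A k, ENNReal.ofReal (|u x - u y| / ‖x - y‖ ^ β) :=
        lintegral_iUnion_le _ _
    _ ≤ ∑' k : ℕ, ENNReal.ofReal (q^k) * K := ENNReal.tsum_le_tsum perk
    _ = ENNReal.ofReal ((1-q)⁻¹) * K := by rw [ENNReal.tsum_mul_right, hsum]
    _ = ENNReal.ofReal (2 * (2:ℝ) ^ (2*(d:ℝ)) * v.toReal / (1 - q)) * ENNReal.ofReal (r ^ (α - 1)) * M := by
        rw [hKdef, div_eq_mul_inv,
          ENNReal.ofReal_mul (by positivity), ENNReal.ofReal_mul (by positivity),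
          ENNReal.ofReal_mul (by positivity), ENNReal.ofReal_mul (by positivity),
          ENNReal.ofReal_toReal hvt, ENNReal.ofReal_ofNat]
        ring
end
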